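/- Let X be a cubical object with connections in an abelian category A, and let F(X) be the chain subcomplex of N(X) with F(X)_0 = 0, F(X)_1 = 0, and F(X)_n = Γ_1(N(X)_{n−1}) + … + Γ_{n−1}(N(X)_{n−1}) for n ≥ 2. Then the canonical projection π : N(X) → N(X)/F(X) is a chain homotopy equivalence. -/

import Mathlib

open CategoryTheory CategoryTheory.Limits

universe v u

structure Precub (C : Type u) [Category.{v} C] where
  X : ℕ → C
  d : ∀ n : ℕ, ℕ → Bool → (X (n + 1) ⟶ X n)
  dd : ∀ (n i j : ℕ) (α ε : Bool), 1 ≤ i → i < j → j ≤ n + 2 →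
    d (n + 1) j ε ≫ d n i α = d (n + 1) i α ≫ d n (j - 1) ε

/-- The subobject `N_n(X) ⊆ X_n`: intersection of the kernels of the faces `∂_i^1`. -/
noncomputable def NSub {C : Type u} [Category.{v} C] [Abelian C] (X : Precub C) :
    ∀ n, Subobject (X.X n)
  | 0 => ⊤
  | (n + 1) => (Finset.Icc 1 (n + 1)).inf fun i => kernelSubobject (X.d n i true)

/-- The subobject `M_n(X) ⊆ X_n`. -/
noncomputable def MSub {C : Type u} [Category.{v} C] [Abelian C] (X : Precub C) :
    ∀ n, Subobject (X.X n)
  | 0 => ⊤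
  | (n + 1) => ((Finset.Icc 1 (n + 1)).inf fun i => kernelSubobject (X.d n i true)) ⊓
      ((Finset.Icc 1 n).inf fun i => kernelSubobject (X.d n i false))

structure Pseudocub (C : Type u) [Category.{v} C] extends Precub C where
  s : ∀ n : ℕ, ℕ → (X n ⟶ X (n + 1))
  ds_lt : ∀ (n i j : ℕ) (α : Bool), 1 ≤ i → i < j → j ≤ n + 2 →
    s (n + 1) j ≫ d (n + 1) i α = d n i α ≫ s n (j - 1)
  ds_eq : ∀ (n i : ℕ) (α : Bool), 1 ≤ i → i ≤ n + 1 → s n i ≫ d n i α = 𝟙 (X n)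
  ds_gt : ∀ (n i j : ℕ) (α : Bool), 1 ≤ j → j < i → i ≤ n + 2 →
    s (n + 1) j ≫ d (n + 1) i α = d n (i - 1) α ≫ s n j

/-- A cubical object with connections. -/
structure CubConn (C : Type u) [Category.{v} C] extends Pseudocub C where
  ss : ∀ (n i j : ℕ), 1 ≤ i → i ≤ j → j ≤ n + 1 →
    s n j ≫ s (n + 1) i = s n i ≫ s (n + 1) (j + 1)
  conn : ∀ n : ℕ, ℕ → (X (n + 1) ⟶ X (n + 2))
  cc : ∀ (n i j : ℕ), 1 ≤ i → i ≤ j → j ≤ n + 1 →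
    conn n j ≫ conn (n + 1) i = conn n i ≫ conn (n + 1) (j + 1)
  cs_lt : ∀ (n i j : ℕ), 1 ≤ i → i < j → j ≤ n + 2 →
    s (n + 1) j ≫ conn (n + 1) i = conn n i ≫ s (n + 2) (j + 1)
  cs_eq : ∀ (n i : ℕ), 1 ≤ i → i ≤ n + 2 →
    s (n + 1) i ≫ conn (n + 1) i = s (n + 1) i ≫ s (n + 2) i
  cs_gt : ∀ (n i j : ℕ), 1 ≤ j → j < i → i ≤ n + 2 →
    s (n + 1) j ≫ conn (n + 1) i = conn n (i - 1) ≫ s (n + 2) j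
  dconn_lt : ∀ (n i j : ℕ) (α : Bool), 1 ≤ i → i < j → j ≤ n + 2 →
    conn (n + 1) j ≫ d (n + 2) i α = d (n + 1) i α ≫ conn n (j - 1)
  dconn_eq_zero : ∀ (n j : ℕ), 1 ≤ j → j ≤ n + 1 →
    conn n j ≫ d (n + 1) j false = 𝟙 (X (n + 1)) ∧
    conn n j ≫ d (n + 1) (j + 1) false = 𝟙 (X (n + 1))
  dconn_eq_one : ∀ (n j : ℕ), 1 ≤ j → j ≤ n + 1 →
    conn n j ≫ d (n + 1) j true = d n j true ≫ s n j ∧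
    conn n j ≫ d (n + 1) (j + 1) true = d n j true ≫ s n j
  dconn_gt : ∀ (n i j : ℕ) (α : Bool), 1 ≤ j → j + 1 < i → i ≤ n + 3 →
    conn (n + 1) j ≫ d (n + 2) i α = d (n + 1) (i - 1) α ≫ conn n j

/-- The subobject `F_n(X) ⊆ X_n`: `F_0 = F_1 = 0` and
`F_n = Γ_1(N_{n-1}(X)) + ⋯ + Γ_{n-1}(N_{n-1}(X))` for `n ≥ 2`. -/
noncomputable def FSub {C : Type u} [Category.{v} C] [Abelian C] (X : CubConn C) :
    ∀ n, Subobject (X.X n)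
  | 0 => ⊥
  | 1 => ⊥
  | (n + 2) => (Finset.Icc 1 (n + 1)).sup fun j =>
      imageSubobject ((NSub X.toPrecub (n + 1)).arrow ≫ X.conn n j)


/-- Data exhibiting `K` as the normalized chain complex `N(X)` of a precubical object `X`
in an abelian category. -/
structure NormalizedData {C : Type u} [Category.{v} C] [Abelian C] (X : Precub C) where
  K : ChainComplex C ℕ
  ι : ∀ n, K.X n ⟶ X.X n
  ι_mono : ∀ n, Mono (ι n)
  ι_ker : ∀ (n i : ℕ), 1 ≤ i → i ≤ n + 1 → ι (n + 1) ≫ X.d n i true = 0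
  ι_lift : ∀ (n : ℕ) {W : C} (g : W ⟶ X.X (n + 1)),
    (∀ i, 1 ≤ i → i ≤ n + 1 → g ≫ X.d n i true = 0) →
    ∃ l : W ⟶ K.X (n + 1), l ≫ ι (n + 1) = g
  ι_lift₀ : ∀ {W : C} (g : W ⟶ X.X 0), ∃ l : W ⟶ K.X 0, l ≫ ι 0 = g
  diff : ∀ n : ℕ, K.d (n + 1) n ≫ ι n =
    ι (n + 1) ≫ ∑ i ∈ Finset.Icc 1 (n + 1), ((-1 : ℤ) ^ (i + 1)) • X.d n i false

/-!
On `N(X)` the connections and the faces `∂_j^0` restrict to maps `Γ_j : N_n → N_{n+1}` and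
`δ_j : N_{n+1} → N_n`. Put `φ_k = (1 - Γ_k δ_k) ∘ ⋯ ∘ (1 - Γ_1 δ_1)`. Since `δ_i φ_k = 0` for
`i ≤ k`, the cubical identities give `(d Γ_{k+1} + Γ_{k+1} d) φ_k = ± Γ_{k+1} δ_{k+1} φ_k`, and
summing over `k` yields `φ_n - 1 = d H + H d` on `N_n` with `H = ∑_k (-1)^k Γ_k φ_{k-1}`.
As `φ_k Γ_j = 0` for `j ≤ k`, `φ_n` kills `F(X)`, while `H` takes values in `F(X)`. Hence
`φ = σ π` for a chain map `σ` with `π σ = 1`, and `σ π = φ` is homotopic to `1`.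
-/

theorem Finset.sum_Icc_eq_sum_add_add_sum {M : Type*} [AddCommMonoid M] (f : ℕ → M) {a k n : ℕ}
    (hak : a ≤ k + 1) (hkn : k + 1 ≤ n) :
    ∑ i ∈ Finset.Icc a n, f i =
      ∑ i ∈ Finset.Icc a k, f i + f (k + 1) + ∑ i ∈ Finset.Icc (k + 2) n, f i := by
  rw [← Finset.sum_Icc_succ_top hak, ← Finset.Ico_add_one_right_eq_Icc,
    ← Finset.Ico_add_one_right_eq_Icc, ← Finset.Ico_add_one_right_eq_Icc]
  exact (Finset.sum_Ico_consecutive f (by omega) (by omega)).symm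

section HomotopyEquiv

variable {C : Type u} [Category.{v} C] [Abelian C] {ι : Type*} {c : ComplexShape ι}
  {K Q : HomologicalComplex C c}

theorem nullHomotopicMap'_comp_eq_zero (h : ∀ i j, c.Rel j i → (K.X i ⟶ K.X j)) (π : K ⟶ Q)
    (hπ : ∀ i j hij, h i j hij ≫ π.f j = 0) : Homotopy.nullHomotopicMap' h ≫ π = 0 := by
  simp only [Homotopy.nullHomotopicMap'_comp, hπ]
  ext n
  simp only [Homotopy.nullHomotopicMap', dite_eq_ite, ite_self]
  change dNext n 0 + prevD n (0 : ∀ i j, K.X i ⟶ Q.X j) = 0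
  rw [map_zero, map_zero, add_zero]

theorem exists_homotopy_inverse_of_epi (π : K ⟶ Q) [∀ n, Epi (π.f n)]
    (h : ∀ i j, c.Rel j i → (K.X i ⟶ K.X j)) (hπ : ∀ i j hij, h i j hij ≫ π.f j = 0)
    (hker : ∀ n, kernel.ι (π.f n) ≫ (𝟙 K + Homotopy.nullHomotopicMap' h).f n = 0) :
    ∃ σ : Q ⟶ K, Nonempty (Homotopy (π ≫ σ) (𝟙 K)) ∧ Nonempty (Homotopy (σ ≫ π) (𝟙 Q)) := by
  set f := 𝟙 K + Homotopy.nullHomotopicMap' h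
  have hfπ : f ≫ π = π := by
    rw [Preadditive.add_comp, nullHomotopicMap'_comp_eq_zero h π hπ, Category.id_comp, add_zero]
  let σ : Q ⟶ K :=
    { f := fun n => Abelian.epiDesc (π.f n) (f.f n) (hker n)
      comm' := fun i j _ => by
        rw [← cancel_epi (π.f i), Abelian.comp_epiDesc_assoc, π.comm_assoc,
          Abelian.comp_epiDesc, f.comm] }
  have hπσ : π ≫ σ = f := by
    ext n
    exact Abelian.comp_epiDesc _ _ _
  have hσπ : σ ≫ π = 𝟙 Q := by
    ext n
    rw [← cancel_epi (π.f n), HomologicalComplex.comp_f, ← Category.assoc,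
      ← HomologicalComplex.comp_f, hπσ, ← HomologicalComplex.comp_f, hfπ]
    simp
  refine ⟨σ, ⟨?_⟩, ⟨Homotopy.ofEq hσπ⟩⟩
  rw [hπσ]
  exact ((Homotopy.refl (𝟙 K)).add (Homotopy.nullHomotopy' h)).trans (Homotopy.ofEq (add_zero _))

end HomotopyEquiv

section ChainComplexNat

variable {C : Type u} [Category.{v} C] [Preadditive C] {K L : ChainComplex C ℕ}

noncomputable def nullHomotopicMapNat (h : ∀ n, K.X n ⟶ L.X (n + 1)) : K ⟶ L :=
  Homotopy.nullHomotopicMap' fun i _ hij => h i ≫ eqToHom (congrArg L.X hij)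

theorem nullHomotopicMapNat_f_zero (h : ∀ n, K.X n ⟶ L.X (n + 1)) :
    (nullHomotopicMapNat h).f 0 = h 0 ≫ L.d 1 0 := by
  rw [nullHomotopicMapNat, Homotopy.nullHomotopicMap'_f_of_not_rel_left (c := ComplexShape.down ℕ)
    (k₁ := 1) rfl (by simp), eqToHom_refl, Category.comp_id]

theorem nullHomotopicMapNat_f_succ (h : ∀ n, K.X n ⟶ L.X (n + 1)) (n : ℕ) :
    (nullHomotopicMapNat h).f (n + 1) = K.d (n + 1) n ≫ h n + h (n + 1) ≫ L.d (n + 2) (n + 1) := by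
  rw [nullHomotopicMapNat, Homotopy.nullHomotopicMap'_f (c := ComplexShape.down ℕ)
    (k₂ := n + 2) rfl rfl, eqToHom_refl, eqToHom_refl, Category.comp_id, Category.comp_id]

end ChainComplexNat

theorem NSub_arrow_d_true {C : Type u} [Category.{v} C] [Abelian C] (X : Precub C) (m i : ℕ)
    (hi₁ : 1 ≤ i) (hi₂ : i ≤ m + 1) : (NSub X (m + 1)).arrow ≫ X.d m i true = 0 := by
  have hle : NSub X (m + 1) ≤ kernelSubobject (X.d m i true) :=
    Finset.inf_le (Finset.mem_Icc.mpr ⟨hi₁, hi₂⟩)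
  rw [← Subobject.ofLE_arrow hle, Category.assoc, kernelSubobject_arrow_comp, comp_zero]

namespace NormalizedData

variable {C : Type u} [Category.{v} C] [Abelian C] {X : CubConn C}
  (ND : NormalizedData X.toPrecub)

instance (n : ℕ) : Mono (ND.ι n) := ND.ι_mono n

theorem ι_conn_d_true_eq_zero (m j : ℕ) (hj₁ : 1 ≤ j) (hj₂ : j ≤ m + 1) (i : ℕ) (hi₁ : 1 ≤ i)
    (hi₂ : i ≤ m + 2) : (ND.ι (m + 1) ≫ X.conn m j) ≫ X.d (m + 1) i true = 0 := by
  rw [Category.assoc]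
  rcases lt_trichotomy i j with hij | rfl | hij
  · obtain ⟨m, rfl⟩ : ∃ m', m = m' + 1 := ⟨m - 1, by omega⟩
    rw [X.dconn_lt m i j true hi₁ hij (by omega), ← Category.assoc,
      ND.ι_ker (m + 1) i hi₁ (by omega), zero_comp]
  · rw [(X.dconn_eq_one m i hi₁ hj₂).1, ← Category.assoc, ND.ι_ker m i hi₁ hj₂, zero_comp]
  · rcases Nat.eq_or_lt_of_le hij with rfl | hij
    · rw [(X.dconn_eq_one m j hj₁ hj₂).2, ← Category.assoc, ND.ι_ker m j hj₁ hj₂, zero_comp]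
    · obtain ⟨m, rfl⟩ : ∃ m', m = m' + 1 := ⟨m - 1, by omega⟩
      rw [X.dconn_gt m i j true hj₁ hij (by omega), ← Category.assoc,
        ND.ι_ker (m + 1) (i - 1) (by omega) (by omega), zero_comp]

theorem ι_d_false_d_true_eq_zero (m j : ℕ) (hj₁ : 1 ≤ j) (hj₂ : j ≤ m + 2) (i : ℕ) (hi₁ : 1 ≤ i)
    (hi₂ : i ≤ m + 1) : (ND.ι (m + 2) ≫ X.d (m + 1) j false) ≫ X.d m i true = 0 := by
  rw [Category.assoc]
  rcases Nat.lt_or_ge i j with hij | hij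
  · rw [X.dd m i j true false hi₁ hij hj₂, ← Category.assoc,
      ND.ι_ker (m + 1) i hi₁ (by omega), zero_comp]
  · rw [← Nat.add_sub_cancel i 1, ← X.dd m j (i + 1) false true hj₁ (by omega) (by omega),
      ← Category.assoc, ND.ι_ker (m + 1) (i + 1) (by omega) (by omega), zero_comp]

/-- The connection `Γ_j : N_n(X) → N_{n+1}(X)`, extended by `0` outside `1 ≤ j ≤ n`. -/
noncomputable def Γ : ∀ n : ℕ, ℕ → (ND.K.X n ⟶ ND.K.X (n + 1))
  | 0, _ => 0
  | m + 1, j =>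
    if h : 1 ≤ j ∧ j ≤ m + 1 then
      (ND.ι_lift (m + 1) _ (ND.ι_conn_d_true_eq_zero m j h.1 h.2)).choose
    else 0

/-- The face `∂_j^0 : N_{n+1}(X) → N_n(X)`, for `1 ≤ j ≤ n + 1`. -/
noncomputable def δ : ∀ n : ℕ, ℕ → (ND.K.X (n + 1) ⟶ ND.K.X n)
  | 0, j => (ND.ι_lift₀ (ND.ι 1 ≫ X.d 0 j false)).choose
  | m + 1, j =>
    if h : 1 ≤ j ∧ j ≤ m + 2 then
      (ND.ι_lift m _ (ND.ι_d_false_d_true_eq_zero m j h.1 h.2)).choose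
    else 0

theorem Γ_comp_ι (m j : ℕ) (hj₁ : 1 ≤ j) (hj₂ : j ≤ m + 1) :
    ND.Γ (m + 1) j ≫ ND.ι (m + 2) = ND.ι (m + 1) ≫ X.conn m j := by
  rw [Γ, dif_pos ⟨hj₁, hj₂⟩]
  exact (ND.ι_lift (m + 1) _ (ND.ι_conn_d_true_eq_zero m j hj₁ hj₂)).choose_spec

theorem Γ_eq_zero_of_lt (n j : ℕ) (h : n < j) : ND.Γ n j = 0 := by
  cases n with
  | zero => rfl
  | succ m => rw [Γ, dif_neg (by omega)]

theorem δ_comp_ι (n j : ℕ) (hj₁ : 1 ≤ j) (hj₂ : j ≤ n + 1) :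
    ND.δ n j ≫ ND.ι n = ND.ι (n + 1) ≫ X.d n j false := by
  cases n with
  | zero => exact (ND.ι_lift₀ (ND.ι 1 ≫ X.d 0 j false)).choose_spec
  | succ m =>
    rw [δ, dif_pos ⟨hj₁, hj₂⟩]
    exact (ND.ι_lift m _ (ND.ι_d_false_d_true_eq_zero m j hj₁ hj₂)).choose_spec

theorem d_eq_sum_δ (n : ℕ) :
    ND.K.d (n + 1) n = ∑ i ∈ Finset.Icc 1 (n + 1), ((-1 : ℤ) ^ (i + 1)) • ND.δ n i := by
  rw [← cancel_mono (ND.ι n), ND.diff n, Preadditive.sum_comp, Preadditive.comp_sum]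
  refine Finset.sum_congr rfl fun i hi => ?_
  obtain ⟨hi₁, hi₂⟩ := Finset.mem_Icc.mp hi
  rw [Preadditive.zsmul_comp, Preadditive.comp_zsmul, ND.δ_comp_ι n i hi₁ hi₂]

theorem Γ_comp_δ_of_lt (n J i : ℕ) (hi : 1 ≤ i) (hiJ : i < J) (hJ : J ≤ n + 1) :
    ND.Γ (n + 1) J ≫ ND.δ (n + 1) i = ND.δ n i ≫ ND.Γ n (J - 1) := by
  obtain ⟨n, rfl⟩ : ∃ n', n = n' + 1 := ⟨n - 1, by omega⟩
  rw [← cancel_mono (ND.ι (n + 2)), Category.assoc, Category.assoc,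
    ND.δ_comp_ι _ i hi (by omega), ← Category.assoc (ND.Γ _ J), ND.Γ_comp_ι _ J (by omega) hJ,
    Category.assoc, X.dconn_lt n i J false hi hiJ (by omega),
    ND.Γ_comp_ι n (J - 1) (by omega) (by omega), ← Category.assoc (ND.δ _ i),
    ND.δ_comp_ι _ i hi (by omega), Category.assoc]

theorem Γ_comp_δ_self (n J : ℕ) (hJ₁ : 1 ≤ J) (hJ₂ : J ≤ n + 1) :
    ND.Γ (n + 1) J ≫ ND.δ (n + 1) J = 𝟙 _ := by
  rw [← cancel_mono (ND.ι (n + 1)), Category.assoc, ND.δ_comp_ι _ J hJ₁ (by omega),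
    ← Category.assoc, ND.Γ_comp_ι n J hJ₁ hJ₂, Category.assoc, (X.dconn_eq_zero n J hJ₁ hJ₂).1,
    Category.comp_id, Category.id_comp]

theorem Γ_comp_δ_succ (n J : ℕ) (hJ₁ : 1 ≤ J) (hJ₂ : J ≤ n + 1) :
    ND.Γ (n + 1) J ≫ ND.δ (n + 1) (J + 1) = 𝟙 _ := by
  rw [← cancel_mono (ND.ι (n + 1)), Category.assoc, ND.δ_comp_ι _ (J + 1) (by omega) (by omega),
    ← Category.assoc, ND.Γ_comp_ι n J hJ₁ hJ₂, Category.assoc, (X.dconn_eq_zero n J hJ₁ hJ₂).2,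
    Category.comp_id, Category.id_comp]

theorem Γ_comp_δ_of_gt (n J i : ℕ) (hJ₁ : 1 ≤ J) (hJ₂ : J ≤ n + 1) (hJi : J + 1 < i)
    (hi : i ≤ n + 2) :
    ND.Γ (n + 1) J ≫ ND.δ (n + 1) i = ND.δ n (i - 1) ≫ ND.Γ n J := by
  obtain ⟨n, rfl⟩ : ∃ n', n = n' + 1 := ⟨n - 1, by omega⟩
  rw [← cancel_mono (ND.ι (n + 2)), Category.assoc, Category.assoc,
    ND.δ_comp_ι _ i (by omega) hi, ← Category.assoc (ND.Γ _ J), ND.Γ_comp_ι _ J hJ₁ (by omega),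
    Category.assoc, X.dconn_gt n i J false hJ₁ hJi (by omega),
    ND.Γ_comp_ι n J hJ₁ (by omega), ← Category.assoc (ND.δ _ (i - 1)),
    ND.δ_comp_ι _ (i - 1) (by omega) (by omega), Category.assoc]

theorem Γ_comp_Γ (n i j : ℕ) (hi : 1 ≤ i) (hij : i ≤ j) (hj : j ≤ n + 1) :
    ND.Γ (n + 1) j ≫ ND.Γ (n + 2) i = ND.Γ (n + 1) i ≫ ND.Γ (n + 2) (j + 1) := by
  rw [← cancel_mono (ND.ι (n + 3)), Category.assoc, Category.assoc,
    ND.Γ_comp_ι _ i hi (by omega), ← Category.assoc (ND.Γ _ j), ND.Γ_comp_ι n j (by omega) hj,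
    Category.assoc, X.cc n i j hi hij hj, ND.Γ_comp_ι _ (j + 1) (by omega) (by omega),
    ← Category.assoc (ND.Γ _ i), ND.Γ_comp_ι n i hi (by omega), Category.assoc]

theorem δ_comp_δ (n i k : ℕ) (hi : 1 ≤ i) (hik : i < k) (hk : k ≤ n + 2) :
    ND.δ (n + 1) k ≫ ND.δ n i = ND.δ (n + 1) i ≫ ND.δ n (k - 1) := by
  rw [← cancel_mono (ND.ι n), Category.assoc, Category.assoc, ND.δ_comp_ι n i hi (by omega),
    ← Category.assoc (ND.δ _ k), ND.δ_comp_ι _ k (by omega) hk, Category.assoc,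
    X.dd n i k false false hi hik hk, ND.δ_comp_ι n (k - 1) (by omega) (by omega),
    ← Category.assoc (ND.δ _ i), ND.δ_comp_ι _ i hi (by omega), Category.assoc]

noncomputable def step : ∀ n : ℕ, ℕ → (ND.K.X n ⟶ ND.K.X n)
  | 0, _ => 𝟙 _
  | m + 1, j => 𝟙 _ - ND.δ m j ≫ ND.Γ m j

noncomputable def φ (n : ℕ) : ℕ → (ND.K.X n ⟶ ND.K.X n)
  | 0 => 𝟙 _
  | j + 1 => φ n j ≫ ND.step n (j + 1)

theorem step_eq_id (n j : ℕ) (h : n ≤ j) : ND.step n j = 𝟙 _ := by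
  cases n with
  | zero => rfl
  | succ m => rw [step, ND.Γ_eq_zero_of_lt m j (by omega), comp_zero, sub_zero]

theorem φ_zero_left (j : ℕ) : ND.φ 0 j = 𝟙 _ := by
  induction j with
  | zero => rfl
  | succ j ih => rw [φ, ih, ND.step_eq_id 0 (j + 1) (by omega), Category.comp_id]

theorem step_comp_δ_of_lt (n k i : ℕ) (hi : 1 ≤ i) (hik : i < k) :
    ND.step (n + 1) k ≫ ND.δ n i = ND.δ n i ≫ ND.step n (k - 1) := by
  rcases Nat.lt_or_ge n k with hnk | hkn
  · rw [ND.step_eq_id (n + 1) k (by omega), ND.step_eq_id n (k - 1) (by omega),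
      Category.id_comp, Category.comp_id]
  · obtain ⟨n, rfl⟩ : ∃ n', n = n' + 1 := ⟨n - 1, by omega⟩
    obtain ⟨k, rfl⟩ : ∃ k', k = k' + 1 := ⟨k - 1, by omega⟩
    rw [step, Preadditive.sub_comp, Category.id_comp, Category.assoc,
      ND.Γ_comp_δ_of_lt n (k + 1) i hi hik (by omega), ← Category.assoc,
      ND.δ_comp_δ n i (k + 1) hi hik (by omega), Nat.add_sub_cancel, step, Preadditive.comp_sub,
      Category.comp_id, Category.assoc]

theorem step_comp_δ_self (n i : ℕ) (hi₁ : 1 ≤ i) (hi₂ : i ≤ n) :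
    ND.step (n + 1) i ≫ ND.δ n i = 0 := by
  obtain ⟨n, rfl⟩ : ∃ n', n = n' + 1 := ⟨n - 1, by omega⟩
  rw [step, Preadditive.sub_comp, Category.id_comp, Category.assoc,
    ND.Γ_comp_δ_self n i hi₁ (by omega), Category.comp_id, sub_self]

theorem φ_comp_δ (n j i : ℕ) (hi : 1 ≤ i) (hij : i ≤ j) (hin : i ≤ n) :
    ND.φ (n + 1) j ≫ ND.δ n i = 0 := by
  induction j with
  | zero => omega
  | succ j ih =>
    rw [φ, Category.assoc]
    rcases Nat.eq_or_lt_of_le hij with rfl | hij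
    · rw [ND.step_comp_δ_self n (j + 1) hi hin, comp_zero]
    · rw [ND.step_comp_δ_of_lt n (j + 1) i hi hij, ← Category.assoc, ih (by omega), zero_comp]

theorem Γ_comp_step_of_lt (n J k : ℕ) (hk : 1 ≤ k) (hkJ : k < J) :
    ND.Γ n J ≫ ND.step (n + 1) k = ND.step n k ≫ ND.Γ n J := by
  rcases Nat.lt_or_ge n J with hnJ | hJn
  · rw [ND.Γ_eq_zero_of_lt n J hnJ, zero_comp, comp_zero]
  · obtain ⟨n, rfl⟩ : ∃ n', n = n' + 2 := ⟨n - 2, by omega⟩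
    obtain ⟨J, rfl⟩ : ∃ J', J = J' + 1 := ⟨J - 1, by omega⟩
    rw [step, step, Preadditive.comp_sub, Preadditive.sub_comp, Category.comp_id,
      Category.id_comp, ← Category.assoc, ND.Γ_comp_δ_of_lt (n + 1) (J + 1) k hk hkJ (by omega),
      Nat.add_sub_cancel, Category.assoc, ND.Γ_comp_Γ n k J hk (by omega) (by omega),
      Category.assoc]

theorem Γ_comp_step_self (n J : ℕ) (hJ₁ : 1 ≤ J) (hJ₂ : J ≤ n) :
    ND.Γ n J ≫ ND.step (n + 1) J = 0 := by
  obtain ⟨n, rfl⟩ : ∃ n', n = n' + 1 := ⟨n - 1, by omega⟩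
  rw [step, Preadditive.comp_sub, Category.comp_id, ← Category.assoc,
    ND.Γ_comp_δ_self n J hJ₁ hJ₂, Category.id_comp, sub_self]

theorem Γ_comp_φ_of_lt (n J j : ℕ) (hjJ : j < J) :
    ND.Γ n J ≫ ND.φ (n + 1) j = ND.φ n j ≫ ND.Γ n J := by
  induction j with
  | zero => rw [φ, φ, Category.comp_id, Category.id_comp]
  | succ j ih =>
    rw [φ, φ, ← Category.assoc, ih (by omega), Category.assoc,
      ND.Γ_comp_step_of_lt n J (j + 1) (by omega) hjJ, Category.assoc]

theorem Γ_comp_φ (n J j : ℕ) (hJ₁ : 1 ≤ J) (hJ₂ : J ≤ n) (hJj : J ≤ j) :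
    ND.Γ n J ≫ ND.φ (n + 1) j = 0 := by
  induction j with
  | zero => omega
  | succ j ih =>
    rw [φ, ← Category.assoc]
    rcases Nat.eq_or_lt_of_le hJj with rfl | hJj
    · rw [ND.Γ_comp_φ_of_lt n (j + 1) j (by omega), Category.assoc,
        ND.Γ_comp_step_self n (j + 1) hJ₁ hJ₂, comp_zero]
    · rw [ih (by omega), zero_comp]

theorem Γ_comp_d (n j : ℕ) (hj : j ≤ n) :
    ND.Γ (n + 1) (j + 1) ≫ ND.K.d (n + 2) (n + 1) =
      ∑ i ∈ Finset.Icc 1 j, ((-1 : ℤ) ^ (i + 1)) • (ND.δ n i ≫ ND.Γ n j) -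
        ∑ i ∈ Finset.Icc (j + 2) (n + 1), ((-1 : ℤ) ^ (i + 1)) • (ND.δ n i ≫ ND.Γ n (j + 1)) := by
  have lower : ∑ i ∈ Finset.Icc 1 j, ((-1 : ℤ) ^ (i + 1)) • (ND.Γ (n + 1) (j + 1) ≫ ND.δ (n + 1) i)
      = ∑ i ∈ Finset.Icc 1 j, ((-1 : ℤ) ^ (i + 1)) • (ND.δ n i ≫ ND.Γ n j) := by
    refine Finset.sum_congr rfl fun i hi => ?_
    obtain ⟨hi₁, hi₂⟩ := Finset.mem_Icc.mp hi
    rw [ND.Γ_comp_δ_of_lt n (j + 1) i hi₁ (by omega) (by omega), Nat.add_sub_cancel]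
  have upper : ∑ i ∈ Finset.Icc (j + 2) (n + 1),
        ((-1 : ℤ) ^ (i + 1 + 1)) • (ND.Γ (n + 1) (j + 1) ≫ ND.δ (n + 1) (i + 1))
      = -∑ i ∈ Finset.Icc (j + 2) (n + 1), ((-1 : ℤ) ^ (i + 1)) • (ND.δ n i ≫ ND.Γ n (j + 1)) := by
    rw [← Finset.sum_neg_distrib]
    refine Finset.sum_congr rfl fun i hi => ?_
    obtain ⟨hi₁, hi₂⟩ := Finset.mem_Icc.mp hi
    rw [ND.Γ_comp_δ_of_gt n (j + 1) (i + 1) (by omega) (by omega) (by omega) (by omega),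
      Nat.add_sub_cancel, pow_succ, mul_neg_one, neg_smul]
  rw [d_eq_sum_δ, Preadditive.comp_sum,
    Finset.sum_Icc_eq_sum_add_add_sum _ (k := j) (by omega) (by omega),
    Finset.sum_Icc_eq_sum_add_add_sum _ (a := j + 2) (k := j + 1) (by omega) (by omega),
    Finset.Icc_eq_empty (a := j + 2) (b := j + 1) (by omega), Finset.sum_empty, zero_add,
    show j + 1 + 2 = j + 2 + 1 from rfl, ← Finset.map_add_right_Icc _ _ 1, Finset.sum_map]
  simp only [Preadditive.comp_zsmul, addRightEmbedding_apply]
  rw [lower, upper, ND.Γ_comp_δ_self n (j + 1) (by omega) (by omega),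
    ND.Γ_comp_δ_succ n (j + 1) (by omega) (by omega), pow_succ (-1 : ℤ) (j + 1 + 1), mul_neg_one,
    neg_smul]
  abel

theorem d_comp_Γ (n j : ℕ) (hj : j ≤ n) :
    ND.K.d (n + 1) n ≫ ND.Γ n (j + 1) =
      ∑ i ∈ Finset.Icc 1 j, ((-1 : ℤ) ^ (i + 1)) • (ND.δ n i ≫ ND.Γ n (j + 1)) +
        ((-1 : ℤ) ^ (j + 1 + 1)) • (ND.δ n (j + 1) ≫ ND.Γ n (j + 1)) +
        ∑ i ∈ Finset.Icc (j + 2) (n + 1), ((-1 : ℤ) ^ (i + 1)) • (ND.δ n i ≫ ND.Γ n (j + 1)) := by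
  rw [d_eq_sum_δ, Preadditive.sum_comp,
    Finset.sum_Icc_eq_sum_add_add_sum _ (k := j) (by omega) (by omega)]
  simp only [Preadditive.zsmul_comp]

theorem φ_comp_Γ_d_add_d_Γ (n j : ℕ) (hj : j ≤ n) :
    ND.φ (n + 1) j ≫ (ND.Γ (n + 1) (j + 1) ≫ ND.K.d (n + 2) (n + 1) +
        ND.K.d (n + 1) n ≫ ND.Γ n (j + 1)) =
      ((-1 : ℤ) ^ (j + 1 + 1)) • (ND.φ (n + 1) j ≫ ND.δ n (j + 1) ≫ ND.Γ n (j + 1)) := by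
  have φ_sum : ∀ g : ℕ → (ND.K.X n ⟶ ND.K.X (n + 1)),
      ND.φ (n + 1) j ≫ ∑ i ∈ Finset.Icc 1 j, ((-1 : ℤ) ^ (i + 1)) • (ND.δ n i ≫ g i) = 0 := by
    intro g
    rw [Preadditive.comp_sum]
    refine Finset.sum_eq_zero fun i hi => ?_
    obtain ⟨hi₁, hi₂⟩ := Finset.mem_Icc.mp hi
    rw [Preadditive.comp_zsmul, ← Category.assoc, ND.φ_comp_δ n j i hi₁ hi₂ (by omega), zero_comp,
      smul_zero]
  rw [ND.Γ_comp_d n j hj, ND.d_comp_Γ n j hj]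
  simp only [Preadditive.comp_add, Preadditive.comp_sub, φ_sum, Preadditive.comp_zsmul]
  abel

noncomputable def H (n : ℕ) : ℕ → (ND.K.X n ⟶ ND.K.X (n + 1))
  | 0 => 0
  | j + 1 => H n j + ((-1 : ℤ) ^ (j + 1)) • (ND.φ n j ≫ ND.Γ n (j + 1))

theorem H_zero_left (j : ℕ) : ND.H 0 j = 0 := by
  induction j with
  | zero => rfl
  | succ j ih => rw [H, ih, ND.Γ_eq_zero_of_lt 0 (j + 1) (by omega), comp_zero, smul_zero,
      add_zero]

theorem H_succ_self (n : ℕ) : ND.H n (n + 1) = ND.H n n := by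
  rw [H, ND.Γ_eq_zero_of_lt n (n + 1) (by omega), comp_zero, smul_zero, add_zero]

theorem φ_succ_sub_φ (n j : ℕ)
    (hcomm : ND.K.d (n + 1) n ≫ ND.φ n j = ND.φ (n + 1) j ≫ ND.K.d (n + 1) n) :
    ND.φ (n + 1) (j + 1) - ND.φ (n + 1) j =
      (((-1 : ℤ) ^ (j + 1)) • (ND.φ (n + 1) j ≫ ND.Γ (n + 1) (j + 1))) ≫ ND.K.d (n + 2) (n + 1) +
        ND.K.d (n + 1) n ≫ (((-1 : ℤ) ^ (j + 1)) • (ND.φ n j ≫ ND.Γ n (j + 1))) := by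
  rcases Nat.lt_or_ge n j with hnj | hjn
  · rw [ND.Γ_eq_zero_of_lt _ _ (by omega), ND.Γ_eq_zero_of_lt _ _ (by omega), φ,
      ND.step_eq_id _ _ (by omega)]
    simp
  · rw [Preadditive.zsmul_comp, Preadditive.comp_zsmul, ← smul_add, Category.assoc,
      ← Category.assoc (ND.K.d _ _), hcomm, Category.assoc, ← Preadditive.comp_add,
      ND.φ_comp_Γ_d_add_d_Γ n j hjn, smul_smul, ← pow_add, φ, step, Preadditive.comp_sub,
      Category.comp_id, sub_sub_cancel_left, show j + 1 + (j + 1 + 1) = 2 * (j + 1) + 1 by ring,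
      pow_succ, pow_mul, neg_one_sq, one_pow, one_mul, neg_one_zsmul]

theorem H_comp_d_add_d_comp_H (j : ℕ) : ∀ n, ND.H (n + 1) j ≫ ND.K.d (n + 2) (n + 1) +
    ND.K.d (n + 1) n ≫ ND.H n j = ND.φ (n + 1) j - 𝟙 _ := by
  induction j with
  | zero => simp [H, φ]
  | succ j ih =>
    have hf : ∀ n, (𝟙 ND.K + nullHomotopicMapNat (ND.H · j)).f n = ND.φ n j := by
      rintro (_ | n)
      · rw [HomologicalComplex.add_f_apply, nullHomotopicMapNat_f_zero, H_zero_left, zero_comp,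
          add_zero, φ_zero_left, HomologicalComplex.id_f]
      · rw [HomologicalComplex.add_f_apply, nullHomotopicMapNat_f_succ, add_comm (ND.K.d _ _ ≫ _),
          ih, HomologicalComplex.id_f, add_sub_cancel]
    intro n
    -- `φ · j = 1 + (d H + H d)` is a chain map, so it commutes with `d`.
    have hcomm := (𝟙 ND.K + nullHomotopicMapNat (ND.H · j)).comm (n + 1) n
    rw [hf, hf] at hcomm
    rw [H, H, Preadditive.add_comp, Preadditive.comp_add, ← sub_add_sub_cancel _ (ND.φ (n + 1) j),
      ND.φ_succ_sub_φ n j hcomm.symm, ← ih n]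
    abel

theorem id_add_nullHomotopicMapNat_H_f (n : ℕ) :
    (𝟙 ND.K + nullHomotopicMapNat fun n => ND.H n n).f n = ND.φ n n := by
  rw [HomologicalComplex.add_f_apply, HomologicalComplex.id_f]
  cases n with
  | zero => rw [nullHomotopicMapNat_f_zero, H_zero_left, zero_comp, add_zero, φ_zero_left]
  | succ n =>
    rw [nullHomotopicMapNat_f_succ, ← H_succ_self, add_comm (ND.K.d _ _ ≫ _),
      H_comp_d_add_d_comp_H, add_sub_cancel]

theorem H_comp_eq_zero {n : ℕ} {W : C} (g : ND.K.X (n + 1) ⟶ W)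
    (hg : ∀ j, 1 ≤ j → ND.Γ n j ≫ g = 0) (j : ℕ) : ND.H n j ≫ g = 0 := by
  induction j with
  | zero => exact zero_comp
  | succ j ih => rw [H, Preadditive.add_comp, ih, Preadditive.zsmul_comp, Category.assoc,
      hg (j + 1) (by omega), comp_zero, smul_zero, add_zero]

theorem ι_factors_NSub (m : ℕ) : (NSub X.toPrecub (m + 1)).Factors (ND.ι (m + 1)) :=
  (Subobject.finset_inf_factors _).mpr fun i hi =>
    kernelSubobject_factors _ _ (ND.ι_ker m i (Finset.mem_Icc.mp hi).1 (Finset.mem_Icc.mp hi).2)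

theorem FSub_factors_Γ_ι (n j : ℕ) (hj : 1 ≤ j) :
    (FSub X (n + 1)).Factors (ND.Γ n j ≫ ND.ι (n + 1)) := by
  rcases Nat.lt_or_ge n j with hnj | hjn
  · rw [ND.Γ_eq_zero_of_lt n j hnj, zero_comp]
    exact Subobject.factors_zero
  obtain ⟨m, rfl⟩ : ∃ m, n = m + 1 := ⟨n - 1, by omega⟩
  refine (Subobject.finset_sup_factors ⟨j, Finset.mem_Icc.mpr ⟨hj, hjn⟩, ?_⟩)
  rw [ND.Γ_comp_ι m j hj hjn, ← Subobject.factorThru_arrow _ _ (ND.ι_factors_NSub m),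
    Category.assoc]
  exact imageSubobject_factors_comp_self _ _

theorem FSub_succ_le_map (n : ℕ) (S : Subobject (ND.K.X (n + 1)))
    (hS : ∀ j, 1 ≤ j → j ≤ n → S.Factors (ND.Γ n j)) :
    FSub X (n + 1) ≤ (Subobject.map (ND.ι (n + 1))).obj S := by
  cases n with
  | zero => exact bot_le
  | succ m =>
    refine Finset.sup_le fun j hj => ?_
    obtain ⟨hj₁, hj₂⟩ := Finset.mem_Icc.mp hj
    obtain ⟨v, hv⟩ := ND.ι_lift m (NSub X.toPrecub (m + 1)).arrow
      (NSub_arrow_d_true X.toPrecub m)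
    rw [← Subobject.mk_arrow S, Subobject.map_mk]
    refine imageSubobject_le_mk _ _ (v ≫ S.factorThru _ (hS j hj₁ hj₂)) ?_
    rw [Category.assoc, Subobject.factorThru_arrow_assoc, ND.Γ_comp_ι m j hj₁ hj₂,
      ← Category.assoc, hv]

theorem pullback_FSub_le_kernelSubobject_φ (n : ℕ) :
    (Subobject.pullback (ND.ι n)).obj (FSub X n) ≤ kernelSubobject (ND.φ n n) := by
  cases n with
  | zero =>
    rw [FSub, ← Subobject.map_bot (ND.ι 0), Subobject.pullback_map_self]
    exact bot_le
  | succ n =>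
    rw [← Subobject.pullback_map_self (ND.ι (n + 1)) (kernelSubobject _)]
    exact (Subobject.pullback _).monotone (ND.FSub_succ_le_map n _ fun j hj₁ hj₂ =>
      kernelSubobject_factors _ _ (ND.Γ_comp_φ n j (n + 1) hj₁ hj₂ (by omega)))

end NormalizedData

/-- The quotient `N(X)/F(X)` is encoded by a degreewise epimorphism `π` whose kernel is `F(X)`,
pulled back along the inclusion `N(X) ↪ X`. -/
theorem stmt3 {C : Type u} [Category.{v} C] [Abelian C] (X : CubConn C)
    (ND : NormalizedData X.toPrecub) (Q : ChainComplex C ℕ) (π : ND.K ⟶ Q)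
    (hepi : ∀ n, Epi (π.f n))
    (hker : ∀ n, kernelSubobject (π.f n) = (Subobject.pullback (ND.ι n)).obj (FSub X n)) :
    ∃ σ : Q ⟶ ND.K,
      Nonempty (Homotopy (π ≫ σ) (𝟙 ND.K)) ∧ Nonempty (Homotopy (σ ≫ π) (𝟙 Q)) := by
  have Γ_comp_π : ∀ n j, 1 ≤ j → ND.Γ n j ≫ π.f (n + 1) = 0 := fun n j hj =>
    (kernelSubobject_factors_iff _ _).mp <| by
      rw [hker]
      exact (pullback_factors_iff _ _ _).mpr (ND.FSub_factors_Γ_ι n j hj)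
  refine exists_homotopy_inverse_of_epi π (fun i _ hij => ND.H i i ≫ eqToHom (congrArg ND.K.X hij))
    ?_ fun n => ?_
  · rintro i _ rfl
    rw [eqToHom_refl, Category.comp_id, ND.H_comp_eq_zero _ (Γ_comp_π i) i]
  · change kernel.ι (π.f n) ≫ (𝟙 ND.K + nullHomotopicMapNat fun n => ND.H n n).f n = 0
    rw [ND.id_add_nullHomotopicMapNat_H_f n]
    exact (kernelSubobject_factors_iff _ _).mp <| Subobject.factors_of_le _
      ((hker n).le.trans (ND.pullback_FSub_le_kernelSubobject_φ n))
      (kernelSubobject_factors _ _ (kernel.condition _))
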